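/- For every n ≥ 0, the following identity holds in the polynomial ring ℤ[x,y,s]: A_{n+1}(x,y,s) = Σ_{i=0}^{n} Σ_{j=0}^{⌊(n−i)/2⌋} γ_{n,i,j} · (s+y)^i · (2xy)^j · (x+y)^{n−i−2j}, where γ_{n,i,j} are the integers determined by the recurrence γ_{n+1,i,j} = γ_{n,i−1,j} + (1+i)·γ_{n,i+1,j−1} + j·γ_{n,i,j} + (n−i−2j+2)·γ_{n,i,j−1}, with initial conditions γ_{0,0,0} = 1, γ_{0,i,j} = 0 for (i,j) ≠ (0,0), and the convention γ_{n,i,j} = 0 whenever i < 0 or j < 0. -/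

import Mathlib

open Finset MvPolynomial

/-- The word `π(1)π(2)⋯π(n)` of a permutation, as a function on 0-based positions. -/
def permWord {n : ℕ} (π : Equiv.Perm (Fin n)) (i : ℕ) : ℕ :=
  if h : i < n then ((π ⟨i, h⟩ : Fin n) : ℕ) + 1 else 0

/-- Number of descents. -/
def desNum {n : ℕ} (π : Equiv.Perm (Fin n)) : ℕ :=
  ((range (n - 1)).filter fun i => permWord π (i + 1) < permWord π i).card

/-- Number of big ascents. -/
def bascNum {n : ℕ} (π : Equiv.Perm (Fin n)) : ℕ :=
  ((range (n - 1)).filter fun i => permWord π i + 2 ≤ permWord π (i + 1)).card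

/-- Number of successions. -/
def sucNum {n : ℕ} (π : Equiv.Perm (Fin n)) : ℕ :=
  ((range (n - 1)).filter fun i => permWord π (i + 1) = permWord π i + 1).card

/-- The trivariate Eulerian polynomial `A_n(x,y,s) ∈ ℤ[x,y,s]`, where
`x = X 0`, `y = X 1`, `s = X 2`. -/
noncomputable def trivEuler (n : ℕ) : MvPolynomial (Fin 3) ℤ :=
  ∑ π : Equiv.Perm (Fin n), X 0 ^ bascNum π * X 1 ^ desNum π * X 2 ^ sucNum π

/-- The numbers `γ_{n,i,j}`: zero for negative `i` or `j`, with `γ_{0,0,0} = 1`,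
`γ_{0,i,j} = 0` for `(i,j) ≠ (0,0)`, and the recurrence
`γ_{n+1,i,j} = γ_{n,i−1,j} + (1+i)γ_{n,i+1,j−1} + jγ_{n,i,j} + (n−i−2j+2)γ_{n,i,j−1}`. -/
def gam : ℕ → ℤ → ℤ → ℤ
  | 0, i, j => if i = 0 ∧ j = 0 then 1 else 0
  | n + 1, i, j =>
      if i < 0 ∨ j < 0 then 0
      else gam n (i - 1) j + (1 + i) * gam n (i + 1) (j - 1) + j * gam n i j +
        ((n : ℤ) - i - 2 * j + 2) * gam n i (j - 1)

/-!
Inserting the new largest letter into the `m + 2` slots of a permutation of `[m + 1]` gives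
`A_{m+2} = (s + y) A_{m+1} + x y Δ A_{m+1}` with `Δ = ∂x + ∂y + ∂s`. Indeed, the weight of a
permutation is a product of one variable per adjacent pair, so `Δ` of it is the sum of its weights
with one pair deleted. Inserting at the front multiplies the weight by `y`, inserting right after
the old maximum multiplies it by `s`, and inserting inside any other pair replaces that pair by
`x y`; if the old maximum is not last, inserting at the end multiplies by `x`, which is `x y` times
the weight with the descent following the old maximum deleted.

On the other side, with `u = s + y`, `v = 2xy`, `w = x + y` we have `Δu = Δw = 2` and `Δv = 2w`,
so the same operator sends `u^i v^j w^k` to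
`u^{i+1} v^j w^k + i u^{i-1} v^{j+1} w^k + j u^i v^j w^{k+1} + k u^i v^{j+1} w^{k-1}`;
collecting coefficients gives exactly the recurrence defining `γ`.
-/

local notation "𝔸" => MvPolynomial (Fin 3) ℤ

theorem Derivation.leibniz_prod {R A M : Type*} [CommSemiring R] [CommSemiring A]
    [AddCommMonoid M] [Algebra R A] [Module A M] [Module R M] (D : Derivation R A M)
    {ι : Type*} [DecidableEq ι] (s : Finset ι) (f : ι → A) :
    D (∏ i ∈ s, f i) = ∑ i ∈ s, (∏ j ∈ s.erase i, f j) • D (f i) := by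
  induction s using Finset.induction_on with
  | empty => simp
  | insert a s ha ih =>
    rw [prod_insert ha, D.leibniz, ih, sum_insert ha, erase_insert ha, smul_sum, add_comm]
    congr 1
    refine sum_congr rfl fun i hi => ?_
    rw [erase_insert_of_ne (ne_of_mem_of_not_mem hi ha).symm,
      prod_insert fun h => ha (mem_of_mem_erase h), mul_smul]

theorem Derivation.monomial_step {R A : Type*} [CommSemiring R] [CommSemiring A] [Algebra R A]
    (D : Derivation R A A) {u v w c : A} (hu : D u = 2) (hv : D v = 2 * w) (hw : D w = 2)
    (hc : 2 * c = v) (a b k : ℕ) :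
    u * (u ^ a * v ^ b * w ^ k) + c * D (u ^ a * v ^ b * w ^ k) =
      u ^ (a + 1) * v ^ b * w ^ k + a * (u ^ (a - 1) * v ^ (b + 1) * w ^ k) +
        b * (u ^ a * v ^ b * w ^ (k + 1)) + k * (u ^ a * v ^ (b + 1) * w ^ (k - 1)) := by
  simp only [D.leibniz, D.leibniz_pow, hu, hv, hw, smul_eq_mul, nsmul_eq_mul]
  subst hc
  rcases b with _ | b
  · push_cast; ring
  · simp only [Nat.add_sub_cancel]; push_cast; ring

noncomputable def pderivSum : Derivation ℤ 𝔸 𝔸 := pderiv 0 + pderiv 1 + pderiv 2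

theorem pderivSum_X (i : Fin 3) : pderivSum (X i) = 1 := by
  fin_cases i <;> simp [pderivSum, pderiv_X]

noncomputable def eulerStep : 𝔸 →ₗ[ℤ] 𝔸 :=
  LinearMap.mulLeft ℤ (X 2 + X 1) + LinearMap.mulLeft ℤ (X 0 * X 1) ∘ₗ pderivSum.toLinearMap

theorem eulerStep_apply (p : 𝔸) :
    eulerStep p = (X 2 + X 1) * p + X 0 * X 1 * pderivSum p := rfl

theorem eulerStep_C_mul (a : ℤ) (p : 𝔸) : eulerStep (C a * p) = C a * eulerStep p := by
  rw [C_mul', map_zsmul, C_mul']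

section Permutations

variable {m : ℕ}

theorem permWord_le (σ : Equiv.Perm (Fin m)) (i : ℕ) : permWord σ i ≤ m := by
  unfold permWord
  split_ifs with h
  · exact (σ ⟨i, h⟩).isLt
  · exact Nat.zero_le m

theorem permWord_ne (σ : Equiv.Perm (Fin m)) {i j : ℕ} (hi : i < m) (hj : j < m)
    (hij : i ≠ j) : permWord σ i ≠ permWord σ j := by
  simp only [permWord, dif_pos hi, dif_pos hj, add_left_inj, ← Fin.ext_iff.not,
    σ.injective.ne_iff, ne_eq, Fin.mk.injEq]
  exact hij

noncomputable def pairWeight (σ : Equiv.Perm (Fin m)) (i : ℕ) : 𝔸 :=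
  if permWord σ (i + 1) < permWord σ i then X 1
  else if permWord σ (i + 1) = permWord σ i + 1 then X 2 else X 0

noncomputable def wordWeight (σ : Equiv.Perm (Fin m)) : 𝔸 :=
  ∏ i ∈ range (m - 1), pairWeight σ i

theorem monomial_eq_wordWeight (σ : Equiv.Perm (Fin m)) :
    X 0 ^ bascNum σ * X 1 ^ desNum σ * X 2 ^ sucNum σ = wordWeight σ := by
  have hsuc : {i ∈ range (m - 1) | ¬permWord σ (i + 1) < permWord σ i ∧
      permWord σ (i + 1) = permWord σ i + 1} =
      {i ∈ range (m - 1) | permWord σ (i + 1) = permWord σ i + 1} :=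
    filter_congr fun i _ => by omega
  have hbasc : {i ∈ range (m - 1) | ¬permWord σ (i + 1) < permWord σ i ∧
      ¬permWord σ (i + 1) = permWord σ i + 1} =
      {i ∈ range (m - 1) | permWord σ i + 2 ≤ permWord σ (i + 1)} :=
    filter_congr fun i hi => by
      have := permWord_ne σ (i := i + 1) (j := i) (by simp only [mem_range] at hi; omega)
        (by simp only [mem_range] at hi; omega)
        (by omega)
      omega
  rw [wordWeight]
  simp only [pairWeight, prod_ite, prod_const, filter_filter, hsuc, hbasc]
  rw [desNum, sucNum, bascNum]
  ring

theorem trivEuler_eq_sum_wordWeight : trivEuler m = ∑ σ : Equiv.Perm (Fin m), wordWeight σ := by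
  simp only [trivEuler, monomial_eq_wordWeight]

/-- The permutation whose word is that of `σ` with the new largest letter `m + 1` inserted at
position `k`. -/
def insertMax (σ : Equiv.Perm (Fin m)) (k : Fin (m + 1)) : Equiv.Perm (Fin (m + 1)) :=
  (finSuccEquiv' k).trans ((Equiv.optionCongr σ).trans (finSuccEquiv' (Fin.last m)).symm)

theorem insertMax_apply_self (σ : Equiv.Perm (Fin m)) (k : Fin (m + 1)) :
    insertMax σ k k = Fin.last m := by
  simp [insertMax, finSuccEquiv'_at]

theorem insertMax_apply_succAbove (σ : Equiv.Perm (Fin m)) (k : Fin (m + 1)) (j : Fin m) :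
    insertMax σ k (k.succAbove j) = (σ j).castSucc := by
  simp [insertMax, finSuccEquiv'_succAbove, finSuccEquiv'_symm_some, Fin.succAbove_last]

theorem insertMax_bijective :
    Function.Bijective fun p : Equiv.Perm (Fin m) × Fin (m + 1) => insertMax p.1 p.2 := by
  rw [Fintype.bijective_iff_injective_and_card]
  refine ⟨fun ⟨σ, k⟩ ⟨σ', k'⟩ h => ?_,
    by simp [Fintype.card_perm, Nat.factorial_succ, mul_comm]⟩
  simp only at h
  obtain rfl : k = k' := (insertMax σ k).injective <| by
    rw [insertMax_apply_self, h, insertMax_apply_self]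
  obtain rfl : σ = σ' := Equiv.ext fun j => Fin.castSucc_injective _ <| by
    rw [← insertMax_apply_succAbove, h, insertMax_apply_succAbove]
  rfl

theorem permWord_insertMax_of_lt (σ : Equiv.Perm (Fin m)) (k : Fin (m + 1)) {i : ℕ}
    (h : i < k) : permWord (insertMax σ k) i = permWord σ i := by
  have him : i < m := by omega
  have hk : (⟨i, by omega⟩ : Fin (m + 1)) = k.succAbove ⟨i, him⟩ :=
    (Fin.succAbove_of_castSucc_lt k ⟨i, him⟩ h).symm
  rw [permWord, dif_pos (by omega), permWord, dif_pos him, hk, insertMax_apply_succAbove,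
    Fin.val_castSucc]

theorem permWord_insertMax_self (σ : Equiv.Perm (Fin m)) (k : Fin (m + 1)) :
    permWord (insertMax σ k) k = m + 1 := by
  rw [permWord, dif_pos k.isLt, Fin.eta, insertMax_apply_self, Fin.val_last]

theorem permWord_insertMax_of_gt (σ : Equiv.Perm (Fin m)) (k : Fin (m + 1)) {i : ℕ}
    (h : k < i) : permWord (insertMax σ k) i = permWord σ (i - 1) := by
  by_cases hi : i < m + 1
  · have hk : (⟨i, hi⟩ : Fin (m + 1)) = k.succAbove ⟨i - 1, by omega⟩ := by
      rw [Fin.succAbove_of_le_castSucc _ _ (by simp only [Fin.castSucc_mk, Fin.le_def]; omega)]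
      ext; simp only [Fin.succ_mk]; omega
    rw [permWord, dif_pos hi, permWord, dif_pos (by omega), hk, insertMax_apply_succAbove,
      Fin.val_castSucc]
  · rw [permWord, dif_neg hi, permWord, dif_neg (by omega)]

theorem pairWeight_insertMax_of_lt (σ : Equiv.Perm (Fin m)) (k : Fin (m + 1)) {i : ℕ}
    (h : i + 1 < k) : pairWeight (insertMax σ k) i = pairWeight σ i := by
  rw [pairWeight, pairWeight, permWord_insertMax_of_lt σ k h,
    permWord_insertMax_of_lt σ k (by omega : i < k)]

theorem pairWeight_insertMax_of_gt (σ : Equiv.Perm (Fin m)) (k : Fin (m + 1)) {i : ℕ}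
    (h : k < i) : pairWeight (insertMax σ k) i = pairWeight σ (i - 1) := by
  rw [pairWeight, pairWeight, permWord_insertMax_of_gt σ k h,
    permWord_insertMax_of_gt σ k (by omega : (k : ℕ) < i + 1), Nat.add_sub_cancel,
    Nat.sub_add_cancel (by omega : 1 ≤ i)]

theorem pairWeight_insertMax_self (σ : Equiv.Perm (Fin m)) (k : Fin (m + 1)) :
    pairWeight (insertMax σ k) k = X 1 := by
  have := permWord_le σ k
  rw [pairWeight, if_pos (by
    rw [permWord_insertMax_self, permWord_insertMax_of_gt σ k (by omega), Nat.add_sub_cancel]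
    omega)]

theorem pairWeight_insertMax_of_succ_eq (σ : Equiv.Perm (Fin m)) (k : Fin (m + 1)) {i : ℕ}
    (h : i + 1 = k) :
    pairWeight (insertMax σ k) i = if permWord σ i = m then X 2 else X 0 := by
  have h₁ : permWord (insertMax σ k) (i + 1) = m + 1 := h ▸ permWord_insertMax_self σ k
  have h₀ : permWord (insertMax σ k) i = permWord σ i :=
    permWord_insertMax_of_lt σ k (by omega)
  have := permWord_le σ i
  rw [pairWeight, h₁, h₀, if_neg (by omega)]
  simp only [add_left_inj, eq_comm]

theorem wordWeight_insertMax_of_eq_zero (σ : Equiv.Perm (Fin (m + 1))) (k : Fin (m + 2))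
    (hk : (k : ℕ) = 0) : wordWeight (insertMax σ k) = X 1 * wordWeight σ := by
  rw [wordWeight, wordWeight, Nat.add_sub_cancel, Nat.add_sub_cancel, prod_range_succ',
    ← hk, pairWeight_insertMax_self σ k, mul_comm]
  exact congrArg _ (prod_congr rfl fun i _ => by
    rw [pairWeight_insertMax_of_gt σ k (by omega), Nat.add_sub_cancel])

theorem wordWeight_insertMax_of_eq_last (σ : Equiv.Perm (Fin (m + 1))) (k : Fin (m + 2))
    (hk : (k : ℕ) = m + 1) :
    wordWeight (insertMax σ k) = (if permWord σ m = m + 1 then X 2 else X 0) * wordWeight σ := by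
  rw [wordWeight, wordWeight, Nat.add_sub_cancel, Nat.add_sub_cancel, prod_range_succ,
    pairWeight_insertMax_of_succ_eq σ k hk.symm, mul_comm]
  exact congrArg _ (prod_congr rfl fun i hi => by
    rw [pairWeight_insertMax_of_lt σ k (by simp only [mem_range] at hi; omega)])

theorem wordWeight_insertMax_of_eq_succ (σ : Equiv.Perm (Fin (m + 1))) (k : Fin (m + 2))
    {c : ℕ} (hk : (k : ℕ) = c + 1) (hc : c < m) :
    wordWeight (insertMax σ k) = (if permWord σ c = m + 1 then X 2 else X 0) * X 1 *
      ∏ i ∈ (range m).erase c, pairWeight σ i := by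
  rw [wordWeight, Nat.add_sub_cancel, ← mul_prod_erase _ _ (mem_range.mpr (by omega : c < m + 1)),
    ← mul_prod_erase _ _ (mem_erase.mpr ⟨by omega, mem_range.mpr (by omega : c + 1 < m + 1)⟩),
    pairWeight_insertMax_of_succ_eq σ k hk.symm, ← hk, pairWeight_insertMax_self σ k,
    mul_assoc]
  congr 2
  refine prod_nbij' (fun i => if i < c then i else i - 1) (fun j => if j < c then j else j + 1)
    (fun i hi => ?_) (fun j hj => ?_) (fun i hi => ?_) (fun j hj => ?_) fun i hi => ?_
  all_goals simp only [mem_erase, mem_range] at *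
  any_goals split_ifs <;> omega
  split_ifs
  · exact pairWeight_insertMax_of_lt σ k (by omega)
  · exact pairWeight_insertMax_of_gt σ k (by omega)

theorem sum_wordWeight_insertMax (σ : Equiv.Perm (Fin (m + 1))) :
    ∑ k, wordWeight (insertMax σ k) = (X 2 + X 1) * wordWeight σ +
      X 0 * X 1 * ∑ c ∈ range m, ∏ i ∈ (range m).erase c, pairWeight σ i := by
  set E : ℕ → 𝔸 := fun c => ∏ i ∈ (range m).erase c, pairWeight σ i
  obtain ⟨q, hqlt, hq⟩ : ∃ q < m + 1, ∀ c < m + 1, permWord σ c = m + 1 ↔ c = q :=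
    ⟨σ.symm (Fin.last m), (σ.symm _).isLt, fun c hc =>
      calc permWord σ c = m + 1 ↔ σ ⟨c, hc⟩ = Fin.last m := by
            simp [permWord, hc, Fin.ext_iff]
        _ ↔ c = σ.symm (Fin.last m) := by rw [← Equiv.eq_symm_apply, Fin.ext_iff]⟩
  have hX0 : ∀ c < m + 1, c ≠ q → (if permWord σ c = m + 1 then X 2 else X 0 : 𝔸) = X 0 :=
    fun c hc hcq => if_neg ((hq c hc).not.mpr hcq)
  have hX2 : (if permWord σ q = m + 1 then X 2 else X 0 : 𝔸) = X 2 :=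
    if_pos ((hq q hqlt).mpr rfl)
  rw [Fin.sum_univ_succ, Fin.sum_univ_castSucc, wordWeight_insertMax_of_eq_zero σ _ rfl,
    wordWeight_insertMax_of_eq_last σ _ (by simp),
    sum_congr rfl fun j _ => wordWeight_insertMax_of_eq_succ σ _ (by simp) j.isLt,
    Fin.sum_univ_eq_sum_range (fun c => (if permWord σ c = m + 1 then X 2 else X 0) * X 1 * E c)]
  rcases Nat.lt_or_eq_of_le (Nat.le_of_lt_succ hqlt) with hqm | rfl
  · have hW : wordWeight σ = X 1 * E q := by
      rw [wordWeight, Nat.add_sub_cancel, ← mul_prod_erase _ _ (mem_range.mpr hqm)]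
      have hmax := (hq q hqlt).mpr rfl
      have hnext := permWord_le σ (q + 1)
      have hne := permWord_ne σ (i := q + 1) (j := q) (by omega) hqlt (by omega)
      rw [pairWeight, if_pos (by omega)]
    rw [hX0 m (by omega) (by omega), ← add_sum_erase _ _ (mem_range.mpr hqm), hX2,
      sum_congr rfl fun c hc => by
        have := mem_range.mp (mem_of_mem_erase hc); rw [hX0 c (by omega) (ne_of_mem_erase hc)],
      ← mul_sum, ← add_sum_erase _ _ (mem_range.mpr hqm), hW]
    ring
  · rw [hX2, sum_congr rfl fun c hc => by
        have := mem_range.mp hc; rw [hX0 c (by omega) (by omega)], ← mul_sum]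
    ring

theorem pderivSum_wordWeight (σ : Equiv.Perm (Fin m)) :
    pderivSum (wordWeight σ) =
      ∑ c ∈ range (m - 1), ∏ i ∈ (range (m - 1)).erase c, pairWeight σ i := by
  have h : ∀ i, pderivSum (pairWeight σ i) = 1 := fun i => by
    unfold pairWeight; split_ifs <;> exact pderivSum_X _
  simp only [wordWeight, Derivation.leibniz_prod, h, smul_eq_mul, mul_one]

end Permutations

theorem trivEuler_succ_succ (m : ℕ) : trivEuler (m + 2) = eulerStep (trivEuler (m + 1)) := by
  have hstep : ∀ σ : Equiv.Perm (Fin (m + 1)),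
      eulerStep (wordWeight σ) = ∑ k, wordWeight (insertMax σ k) := fun σ => by
    rw [sum_wordWeight_insertMax, eulerStep_apply, pderivSum_wordWeight, Nat.add_sub_cancel]
  rw [trivEuler_eq_sum_wordWeight, trivEuler_eq_sum_wordWeight, map_sum]
  simp only [hstep, ← Fintype.sum_prod_type']
  exact (Fintype.sum_bijective _ insertMax_bijective _ _ fun _ => rfl).symm

theorem trivEuler_one : trivEuler 1 = 1 := by
  simp [trivEuler, bascNum, desNum, sucNum]

theorem gam_eq_zero_of_neg {n : ℕ} {i j : ℤ} (h : i < 0 ∨ j < 0) : gam n i j = 0 := by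
  cases n with
  | zero => rw [gam, if_neg (by omega)]
  | succ n => rw [gam, if_pos h]

theorem gam_succ (n : ℕ) (i j : ℤ) :
    gam (n + 1) i j = gam n (i - 1) j + (1 + i) * gam n (i + 1) (j - 1) + j * gam n i j +
      ((n : ℤ) - i - 2 * j + 2) * gam n i (j - 1) := by
  rw [gam]
  split_ifs with h
  · have h₁ : (1 + i) * gam n (i + 1) (j - 1) = 0 := by
      obtain rfl | hi := eq_or_ne i (-1)
      · ring
      · rw [gam_eq_zero_of_neg (by omega), mul_zero]
    rw [h₁, gam_eq_zero_of_neg (by omega), gam_eq_zero_of_neg h,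
      gam_eq_zero_of_neg (j := j - 1) (by omega)]
    ring
  · rfl

theorem bounds_of_gam_ne_zero {n : ℕ} {i j : ℤ} (h : gam n i j ≠ 0) :
    0 ≤ i ∧ 0 ≤ j ∧ i + 2 * j ≤ n := by
  induction n generalizing i j with
  | zero =>
    by_contra hb
    exact h (by rw [gam, if_neg (by omega)])
  | succ n ih =>
    have hz : ∀ i' j', (n : ℤ) < i' + 2 * j' → gam n i' j' = 0 := fun i' j' h' => by
      by_contra h''; have := ih h''; omega
    by_contra hb
    refine h ?_
    rcases (show i < 0 ∨ j < 0 ∨ (n : ℤ) + 1 < i + 2 * j by omega) with hneg | hneg | hn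
    · exact gam_eq_zero_of_neg (Or.inl hneg)
    · exact gam_eq_zero_of_neg (Or.inr hneg)
    rw [gam_succ, hz _ _ (by omega), hz _ _ (by omega), hz _ _ (by omega)]
    obtain h₀ | h₀ := eq_or_ne ((n : ℤ) - i - 2 * j + 2) 0
    · rw [h₀]; ring
    · rw [hz _ _ (by omega)]; ring

noncomputable def square (n : ℕ) : Finset (ℤ × ℤ) := Icc 0 (n : ℤ) ×ˢ Icc 0 (n : ℤ)

theorem mem_square {n : ℕ} {p : ℤ × ℤ} :
    p ∈ square n ↔ 0 ≤ p.1 ∧ p.1 ≤ n ∧ 0 ≤ p.2 ∧ p.2 ≤ n := by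
  simp only [square, mem_product, mem_Icc, and_assoc]

theorem mem_square_of_gam_ne_zero {n : ℕ} {p : ℤ × ℤ} (h : gam n p.1 p.2 ≠ 0) :
    p ∈ square n := by
  have := bounds_of_gam_ne_zero h
  rw [mem_square]
  omega

/-- Indexing by `ℤ × ℤ` turns the index shifts in the recurrence for `γ` into translations;
the truncations `toNat` only matter where the coefficient in front of the monomial vanishes. -/
noncomputable def gammaMonomial (n : ℕ) (p : ℤ × ℤ) : 𝔸 :=
  (X 2 + X 1) ^ p.1.toNat * (2 * X 0 * X 1) ^ p.2.toNat *
    (X 0 + X 1) ^ (n - p.1 - 2 * p.2).toNat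

theorem gammaMonomial_eq {n : ℕ} {p : ℤ × ℤ} {a b k : ℕ} (ha : p.1.toNat = a)
    (hb : p.2.toNat = b) (hk : (n - p.1 - 2 * p.2).toNat = k) :
    gammaMonomial n p = (X 2 + X 1) ^ a * (2 * X 0 * X 1) ^ b * (X 0 + X 1) ^ k := by
  subst ha hb hk; rfl

noncomputable def gammaPoly (n : ℕ) : 𝔸 :=
  ∑ p ∈ square n, C (gam n p.1 p.2) * gammaMonomial n p

theorem eulerStep_monomial (n : ℕ) (p : ℤ × ℤ) :
    C (gam n p.1 p.2) * eulerStep (gammaMonomial n p) =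
      C (1 * gam n p.1 p.2) * gammaMonomial (n + 1) (p + (1, 0)) +
      C (p.1 * gam n p.1 p.2) * gammaMonomial (n + 1) (p + (-1, 1)) +
      C (p.2 * gam n p.1 p.2) * gammaMonomial (n + 1) (p + (0, 0)) +
      C ((n - p.1 - 2 * p.2) * gam n p.1 p.2) * gammaMonomial (n + 1) (p + (0, 1)) := by
  by_cases h : gam n p.1 p.2 = 0
  · simp [h]
  obtain ⟨hi, hj, hn⟩ := bounds_of_gam_ne_zero h
  obtain ⟨i, j⟩ := p
  obtain ⟨a, b, k, rfl, rfl, rfl⟩ : ∃ a b k : ℕ, i = a ∧ j = b ∧ n = a + 2 * b + k :=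
    ⟨i.toNat, j.toNat, n - i.toNat - 2 * j.toNat, by omega, by omega, by omega⟩
  have h₂ : pderivSum (2 : 𝔸) = 0 := by exact_mod_cast pderivSum.map_natCast 2
  have hstep := pderivSum.monomial_step (u := X 2 + X 1) (v := 2 * X 0 * X 1) (w := X 0 + X 1)
    (c := X 0 * X 1) (by simp only [map_add, pderivSum_X]; norm_num)
    (by simp only [Derivation.leibniz, pderivSum_X, smul_eq_mul, mul_one, h₂, mul_zero, add_zero]
        ring)
    (by simp only [map_add, pderivSum_X]; norm_num) (by ring) a b k
  simp only [Prod.mk_add_mk, add_zero]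
  rw [gammaMonomial_eq (p := (a, b)) (a := a) (b := b) (k := k) (by omega) (by omega) (by omega),
    gammaMonomial_eq (p := (a + 1, b)) (a := a + 1) (b := b) (k := k) (by omega) (by omega)
      (by omega),
    gammaMonomial_eq (p := (a + -1, b + 1)) (a := a - 1) (b := b + 1) (k := k) (by omega)
      (by omega) (by omega),
    gammaMonomial_eq (p := (a, b)) (a := a) (b := b) (k := k + 1) (by omega) (by omega)
      (by omega),
    gammaMonomial_eq (p := (a, b + 1)) (a := a) (b := b + 1) (k := k - 1) (by omega) (by omega)
      (by omega),
    eulerStep_apply, hstep]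
  simp only [map_mul, map_sub, map_natCast, map_one, map_ofNat]
  push_cast
  ring

theorem sum_square_shift (n : ℕ) (c : ℤ × ℤ → ℤ) (e : ℤ × ℤ)
    (he : ∀ i j : ℤ, 0 ≤ i → 0 ≤ j → i + 2 * j ≤ n → c (i, j) ≠ 0 →
      (i, j) + e ∈ square (n + 1)) :
    ∑ p ∈ square n, C (c p * gam n p.1 p.2) * gammaMonomial (n + 1) (p + e) =
      ∑ p ∈ square (n + 1), C (c (p - e) * gam n (p - e).1 (p - e).2) *
        gammaMonomial (n + 1) p := by
  set f : ℤ × ℤ → 𝔸 := fun p => C (c p * gam n p.1 p.2) * gammaMonomial (n + 1) (p + e)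
  have hf : ∀ p, f p ≠ 0 → c p ≠ 0 ∧ gam n p.1 p.2 ≠ 0 := fun p hp =>
    mul_ne_zero_iff.mp fun h => hp (by simp only [f, h, map_zero, zero_mul])
  calc ∑ p ∈ square n, f p = ∑ᶠ p, f p :=
        (finsum_eq_sum_of_support_subset f fun p hp =>
          mem_square_of_gam_ne_zero (hf p hp).2).symm
    _ = ∑ᶠ p, f (Equiv.subRight e p) := (finsum_comp_equiv _).symm
    _ = ∑ p ∈ square (n + 1), f (p - e) :=
        finsum_eq_sum_of_support_subset _ fun p hp => by
          obtain ⟨hc, hγ⟩ := hf _ hp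
          obtain ⟨hi, hj, hn⟩ := bounds_of_gam_ne_zero hγ
          simpa only [Prod.mk.eta, Equiv.subRight_apply, sub_add_cancel, mem_coe] using
            he _ _ hi hj hn hc
    _ = _ := by simp [f]

theorem eulerStep_gammaPoly (n : ℕ) : eulerStep (gammaPoly n) = gammaPoly (n + 1) := by
  rw [gammaPoly, map_sum]
  simp only [eulerStep_C_mul, eulerStep_monomial, sum_add_distrib]
  rw [sum_square_shift n (fun _ => 1) (1, 0)
      (by intros; simp only [mem_square, Prod.mk_add_mk] at *; omega),
    sum_square_shift n (fun p => p.1) (-1, 1)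
      (by intros; simp only [mem_square, Prod.mk_add_mk] at *; omega),
    sum_square_shift n (fun p => p.2) (0, 0)
      (by intros; simp only [mem_square, Prod.mk_add_mk] at *; omega),
    sum_square_shift n (fun p => n - p.1 - 2 * p.2) (0, 1)
      (by intros; simp only [mem_square, Prod.mk_add_mk] at *; omega)]
  simp only [← sum_add_distrib, ← add_mul, ← map_add]
  refine sum_congr rfl fun p _ => ?_
  rw [gam_succ]
  congr 2
  simp only [Prod.fst_sub, Prod.snd_sub, sub_neg_eq_add, sub_zero]
  ring

theorem gammaPoly_zero : gammaPoly 0 = 1 := by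
  simp [gammaPoly, square, gammaMonomial, gam]

theorem gammaPoly_eq_sum (n : ℕ) :
    gammaPoly n = ∑ i ∈ range (n + 1), ∑ j ∈ range ((n - i) / 2 + 1),
      C (gam n i j) * (X 2 + X 1) ^ i * ((2 : 𝔸) * X 0 * X 1) ^ j *
        (X 0 + X 1) ^ (n - i - 2 * j) := by
  symm
  calc _ = ∑ i ∈ range (n + 1), ∑ j ∈ range (n + 1),
        C (gam n i j) * (X 2 + X 1) ^ i * ((2 : 𝔸) * X 0 * X 1) ^ j *
          (X 0 + X 1) ^ (n - i - 2 * j) := by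
        refine sum_congr rfl fun i _ => sum_subset (fun j => by simp only [mem_range]; omega)
          fun j _ hj => ?_
        have : gam n i j = 0 := by
          by_contra h; have := bounds_of_gam_ne_zero h; simp only [mem_range] at hj; omega
        simp [this]
    _ = _ := by
        rw [← sum_product']
        refine sum_nbij' (fun q => ((q.1 : ℤ), (q.2 : ℤ))) (fun p => (p.1.toNat, p.2.toNat))
          (fun q hq => by simp only [mem_product, mem_range] at hq; rw [mem_square]; omega)
          (fun p hp => by rw [mem_square] at hp; simp only [mem_product, mem_range]; omega)
          (fun q _ => by simp)
          (fun p hp => by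
            rw [mem_square] at hp
            ext <;> simp only [Int.toNat_of_nonneg hp.1, Int.toNat_of_nonneg hp.2.2.1])
          fun q _ => ?_
        rw [gammaMonomial_eq (a := q.1) (b := q.2) (k := n - q.1 - 2 * q.2) (by simp) (by simp)
          (by omega)]
        ring

theorem trivEuler_succ_eq_gammaPoly (n : ℕ) : trivEuler (n + 1) = gammaPoly n := by
  induction n with
  | zero => rw [trivEuler_one, gammaPoly_zero]
  | succ n ih => rw [trivEuler_succ_succ, ih, eulerStep_gammaPoly]

/-- `A_{n+1}(x,y,s) = Σ_{i=0}^n Σ_{j=0}^{⌊(n−i)/2⌋} γ_{n,i,j} (s+y)^i (2xy)^j (x+y)^{n−i−2j}`. -/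
theorem stmt1 (n : ℕ) :
    trivEuler (n + 1) =
      ∑ i ∈ range (n + 1), ∑ j ∈ range ((n - i) / 2 + 1),
        MvPolynomial.C (gam n i j) * (X 2 + X 1) ^ i *
          ((2 : MvPolynomial (Fin 3) ℤ) * X 0 * X 1) ^ j * (X 0 + X 1) ^ (n - i - 2 * j) := by
  rw [trivEuler_succ_eq_gammaPoly, gammaPoly_eq_sum]
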